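/- Let G be a plane graph that contains neither K4 nor C6 as a subgraph. Then every triangular block B of G is one of the following five types: a single edge K2, a triangle K3, B4 (two triangles sharing an edge), B_{5,a} (three triangles on five vertices sharing a common apex vertex, consecutive triangles sharing an edge), or B_{5,b} (four triangles on five vertices all sharing a common central vertex, forming a wheel on 4 outer vertices, i.e., C4 plus a vertex joined to all four cycle vertices). -/

import Mathlib

/-!
Grow the block from one triangular face. A dart lies on exactly one face, so a 3-face through a
dart of a face already in the block is that face, and new triangles can only sit on the outward
darts of boundary edges. A triangle there whose apex already lies in the block is the other side
of a lone triangle, shares a dart with a known face, completes a `K₄`, or closes the fan `B₅ₐ`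
into the wheel `B₅ᵦ`. Otherwise its apex is new, and the block grows from the triangle through the
diamond `B₄` to the fan; on the fan and on the wheel, a triangle with a new apex closes a `C₆`
through the block.
-/

open SimpleGraph

namespace PlanarTuran

/-- Reversal of darts, as a permutation of the darts of `G`. -/
def dartRev {V : Type*} (G : SimpleGraph V) : Equiv.Perm G.Dart where
  toFun := Dart.symm
  invFun := Dart.symm
  left_inv d := Dart.symm_symm d
  right_inv d := Dart.symm_symm d

/-- A rotation system (combinatorial embedding) of a simple graph `G`: a permutation of the
darts which fixes the initial vertex of every dart and is a single cycle on the darts leaving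
each given vertex. -/
structure RotationSystem {V : Type*} (G : SimpleGraph V) where
  rot : Equiv.Perm G.Dart
  rot_fst : ∀ d : G.Dart, (rot d).fst = d.fst
  rot_cycle : ∀ d d' : G.Dart, d.fst = d'.fst → rot.SameCycle d d'

namespace RotationSystem

variable {V : Type*} {G : SimpleGraph V}

/-- The face permutation of the embedding: its orbits are the faces of the plane graph. -/
def facePerm (R : RotationSystem G) : Equiv.Perm G.Dart :=
  (dartRev G).trans R.rot

/-- The face containing (the side of) a dart, encoded as the set of darts on its boundary walk. -/
def faceOf (R : RotationSystem G) (d : G.Dart) : Set G.Dart :=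
  {d' | R.facePerm.SameCycle d d'}

/-- The length of the face incident to the dart `d`: the number of edge-sides on its
boundary walk (a bridge is counted twice). -/
noncomputable def faceLen (R : RotationSystem G) (d : G.Dart) : ℕ :=
  (R.faceOf d).ncard

/-- Darts lying on the same face. -/
def faceSetoid (R : RotationSystem G) : Setoid G.Dart :=
  ⟨R.facePerm.SameCycle,
   ⟨fun d => Equiv.Perm.SameCycle.refl _ d, fun h => h.symm, fun h h' => h.trans h'⟩⟩

/-- The number of faces of the embedded graph (only counting faces having at least one edge on
their boundary). -/
noncomputable def numFaces (R : RotationSystem G) : ℕ :=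
  Nat.card (Quotient R.faceSetoid)

/-- Darts on the same face, within the connected component `C`. -/
def faceSetoidIn (R : RotationSystem G) (C : G.ConnectedComponent) :
    Setoid {d : G.Dart // G.connectedComponentMk d.fst = C} :=
  ⟨fun d d' => R.facePerm.SameCycle d.1 d'.1,
   ⟨fun d => Equiv.Perm.SameCycle.refl _ _, fun h => h.symm, fun h h' => h.trans h'⟩⟩

/-- The rotation system is a *plane* (genus zero) embedding: every connected component
containing at least one edge satisfies Euler's formula `n - e + f = 2`
(written here as `2*n + 2*f = 2*e + 4`, where `2*e` is the number of darts). -/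
def GenusZero (R : RotationSystem G) : Prop :=
  ∀ C : G.ConnectedComponent, (∃ d : G.Dart, G.connectedComponentMk d.fst = C) →
    2 * Nat.card {v : V // G.connectedComponentMk v = C}
      + 2 * Nat.card (Quotient (R.faceSetoidIn C))
      = Nat.card {d : G.Dart // G.connectedComponentMk d.fst = C} + 4

/-- The contribution `f(e) = 1/l₁ + 1/l₂` of an edge `e` to the face number, where `l₁, l₂`
are the lengths of the faces incident to the two darts of `e` (for a bridge both darts lie
on the same face, giving `f(e) = 2/l`). -/
noncomputable def fEdge [Fintype V] [DecidableEq V] [DecidableRel G.Adj]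
    (R : RotationSystem G) (e : Sym2 V) : ℚ :=
  ∑ d ∈ Finset.univ.filter (fun d : G.Dart => d.edge = e), (1 : ℚ) / (R.faceLen d)

/-- The edges `e₁` and `e₂` both lie on a common `3`-face. -/
def shares3Face (R : RotationSystem G) (e₁ e₂ : Sym2 V) : Prop :=
  ∃ d₁ d₂ : G.Dart, d₁.edge = e₁ ∧ d₂.edge = e₂ ∧ R.faceLen d₁ = 3 ∧
    R.facePerm.SameCycle d₁ d₂

/-- The triangular block generated by an edge `e`: the closure of `{e}` under adding all
edges of any `3`-face containing an edge already present. -/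
def triBlockOf (R : RotationSystem G) (e : Sym2 V) : Set (Sym2 V) :=
  {e' | Relation.ReflTransGen R.shares3Face e e'}

/-- `B` is a triangular block of the plane graph `G`. -/
def IsTriangularBlock (R : RotationSystem G) (B : Set (Sym2 V)) : Prop :=
  ∃ e ∈ G.edgeSet, B = R.triBlockOf e

end RotationSystem

/-- A graph is planar iff it admits a genus-zero rotation system. -/
def _root_.SimpleGraph.IsPlanar {V : Type*} (G : SimpleGraph V) : Prop :=
  ∃ R : RotationSystem G, R.GenusZero

/-- `G` contains no cycle of length `k`; equivalently, no subgraph isomorphic to `C_k`. -/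
def _root_.SimpleGraph.CycleFree {V : Type*} (G : SimpleGraph V) (k : ℕ) : Prop :=
  ∀ ⦃v : V⦄ (w : G.Walk v v), w.IsCycle → w.length ≠ k

/-- A graph is 2-connected if it has at least 3 vertices and deleting any single vertex
leaves it connected. -/
def _root_.SimpleGraph.IsTwoConnected {V : Type*} (G : SimpleGraph V) : Prop :=
  3 ≤ Nat.card V ∧ ∀ v : V, (G.induce {u | u ≠ v}).Connected

/-- The set of vertices covered by a set `B` of edges. -/
def blockVerts {V : Type*} (B : Set (Sym2 V)) : Set V :=
  {v | ∃ e ∈ B, v ∈ e}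

/-- An edge set forming a single edge `K₂`. -/
def IsK2Block {V : Type*} (B : Set (Sym2 V)) : Prop :=
  ∃ u v : V, u ≠ v ∧ B = {s(u, v)}

/-- An edge set forming a triangle `K₃`. -/
def IsK3Block {V : Type*} (B : Set (Sym2 V)) : Prop :=
  ∃ u v w : V, u ≠ v ∧ u ≠ w ∧ v ≠ w ∧ B = {s(u, v), s(v, w), s(u, w)}

/-- An edge set forming `B₄`, two triangles `u v w` and `v w x` sharing the edge `v w`
(`K₄` minus an edge). -/
def IsB4Block {V : Type*} (B : Set (Sym2 V)) : Prop :=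
  ∃ u v w x : V, u ≠ v ∧ u ≠ w ∧ u ≠ x ∧ v ≠ w ∧ v ≠ x ∧ w ≠ x ∧
    B = {s(u, v), s(u, w), s(v, w), s(v, x), s(w, x)}

/-- An edge set forming `B₅ₐ`: a path `x₁x₂x₃x₄` plus an apex `y` joined to all of
`x₁, x₂, x₃, x₄`. -/
def IsB5aBlock {V : Type*} (B : Set (Sym2 V)) : Prop :=
  ∃ y x₁ x₂ x₃ x₄ : V, y ≠ x₁ ∧ y ≠ x₂ ∧ y ≠ x₃ ∧ y ≠ x₄ ∧ x₁ ≠ x₂ ∧ x₁ ≠ x₃ ∧ x₁ ≠ x₄ ∧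
    x₂ ≠ x₃ ∧ x₂ ≠ x₄ ∧ x₃ ≠ x₄ ∧
    B = {s(y, x₁), s(y, x₂), s(y, x₃), s(y, x₄), s(x₁, x₂), s(x₂, x₃), s(x₃, x₄)}

/-- An edge set forming `B₅ᵦ`, the wheel `W₄`: a `4`-cycle `x₁x₂x₃x₄` plus a center `c`
joined to all four cycle vertices. -/
def IsB5bBlock {V : Type*} (B : Set (Sym2 V)) : Prop :=
  ∃ c x₁ x₂ x₃ x₄ : V, c ≠ x₁ ∧ c ≠ x₂ ∧ c ≠ x₃ ∧ c ≠ x₄ ∧ x₁ ≠ x₂ ∧ x₁ ≠ x₃ ∧ x₁ ≠ x₄ ∧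
    x₂ ≠ x₃ ∧ x₂ ≠ x₄ ∧ x₃ ≠ x₄ ∧
    B = {s(c, x₁), s(c, x₂), s(c, x₃), s(c, x₄), s(x₁, x₂), s(x₂, x₃), s(x₃, x₄), s(x₄, x₁)}

end PlanarTuran

open PlanarTuran

namespace PlanarTuran

variable {V : Type*} {G : SimpleGraph V}

lemma not_cliqueFree_four_of_adj {a b c d : V} (hab : G.Adj a b) (hac : G.Adj a c)
    (had : G.Adj a d) (hbc : G.Adj b c) (hbd : G.Adj b d) (hcd : G.Adj c d) :
    ¬ G.CliqueFree 4 := by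
  classical
  refine fun h => h {a, b, c, d} ((is3Clique_triple_iff.2 ⟨hbc, hbd, hcd⟩).insert ?_)
  simp [hab, hac, had]

lemma not_cycleFree_six_of_adj {a b c d e f : V} (hab : G.Adj a b) (hbc : G.Adj b c)
    (hcd : G.Adj c d) (hde : G.Adj d e) (hef : G.Adj e f) (hfa : G.Adj f a)
    (hac : a ≠ c) (had : a ≠ d) (hae : a ≠ e) (hbd : b ≠ d) (hbe : b ≠ e) (hbf : b ≠ f)
    (hce : c ≠ e) (hcf : c ≠ f) (hdf : d ≠ f) : ¬ G.CycleFree 6 := by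
  intro h
  refine h (.cons hab (.cons hbc (.cons hcd (.cons hde (.cons hef (.cons hfa .nil)))))) ?_ rfl
  rw [Walk.cons_isCycle_iff, Walk.isPath_def]
  simp [*, hab.ne, hbc.ne, hcd.ne, hde.ne, hef.ne, hfa.ne, hab.ne', hfa.ne', Ne.symm]

lemma mk_mem_comm {S : Set (Sym2 V)} {a b : V} : s(a, b) ∈ S ↔ s(b, a) ∈ S := by
  rw [Sym2.eq_swap]

namespace RotationSystem

variable (R : RotationSystem G)

lemma facePerm_fst (d : G.Dart) : (R.facePerm d).fst = d.snd := R.rot_fst _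

lemma faceOf_eq_orbit (d : G.Dart) :
    R.faceOf d = MulAction.orbit (Subgroup.zpowers R.facePerm) d := by
  ext d'
  simp only [faceOf, Set.mem_ofPred_eq, MulAction.mem_orbit_iff, Subgroup.exists_zpowers]
  rfl

lemma faceLen_eq_minimalPeriod (d : G.Dart) :
    R.faceLen d = Function.minimalPeriod R.facePerm d := by
  rw [faceLen, faceOf_eq_orbit, ← Nat.card_coe_set_eq,
    Nat.card_congr (MulAction.orbitZPowersEquiv R.facePerm d), Nat.card_zmod]
  rfl

lemma faceOf_subset_of_faceLen_eq_three {d : G.Dart} (h : R.faceLen d = 3) :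
    R.faceOf d ⊆ {d, R.facePerm d, R.facePerm (R.facePerm d)} := by
  rw [faceLen_eq_minimalPeriod] at h
  rintro _ ⟨n, rfl⟩
  have key := MulAction.zpow_smul_mod_minimalPeriod R.facePerm d n
  simp only [Equiv.Perm.smul_def] at key
  change (R.facePerm ^ (n % (Function.minimalPeriod R.facePerm d : ℤ))) d = _ at key
  rw [h] at key
  rw [← key]
  have hk₀ := Int.emod_nonneg n (by norm_num : (3 : ℤ) ≠ 0)
  have hk₃ := Int.emod_lt_of_pos n (by norm_num : (0 : ℤ) < 3)
  generalize n % ((3 : ℕ) : ℤ) = k at *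
  interval_cases k <;> simp [zpow_ofNat, pow_succ]

lemma facePerm_mem_faceOf (d : G.Dart) : R.facePerm d ∈ R.faceOf d :=
  Equiv.Perm.SameCycle.refl _ _ |>.apply_right

lemma faceLen_eq_of_mem {d d' : G.Dart} (h : d' ∈ R.faceOf d) : R.faceLen d' = R.faceLen d := by
  have : R.faceOf d' = R.faceOf d := Set.ext fun _ => ⟨h.trans, h.symm.trans⟩
  rw [faceLen, this, faceLen]

structure IsTriangleFace (t : G.Dart) (x y z : V) : Prop where
  faceLen_eq : R.faceLen t = 3
  fst_eq : t.fst = x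
  snd_eq : t.snd = y
  apex_eq : (R.facePerm t).snd = z

variable {R}

namespace IsTriangleFace

variable {t t' : G.Dart} {x y z z' : V}

lemma of_faceLen (h : R.faceLen t = 3) : R.IsTriangleFace t t.fst t.snd (R.facePerm t).snd :=
  ⟨h, rfl, rfl, rfl⟩

lemma facePerm_facePerm_facePerm (h : R.IsTriangleFace t x y z) :
    R.facePerm (R.facePerm (R.facePerm t)) = t := by
  have := Function.iterate_minimalPeriod (f := R.facePerm) (x := t)
  rwa [← faceLen_eq_minimalPeriod, h.faceLen_eq] at this

lemma rotate (h : R.IsTriangleFace t x y z) : R.IsTriangleFace (R.facePerm t) y z x where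
  faceLen_eq := (R.faceLen_eq_of_mem (R.facePerm_mem_faceOf t)).trans h.faceLen_eq
  fst_eq := (R.facePerm_fst t).trans h.snd_eq
  snd_eq := h.apex_eq
  apex_eq := by rw [← R.facePerm_fst, h.facePerm_facePerm_facePerm, h.fst_eq]

lemma adj₁₂ (h : R.IsTriangleFace t x y z) : G.Adj x y := h.fst_eq ▸ h.snd_eq ▸ t.adj
lemma adj₂₃ (h : R.IsTriangleFace t x y z) : G.Adj y z := h.rotate.adj₁₂
lemma adj₃₁ (h : R.IsTriangleFace t x y z) : G.Adj z x := h.rotate.rotate.adj₁₂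

lemma apex_unique (h : R.IsTriangleFace t x y z) (h' : R.IsTriangleFace t' x y z') : z = z' := by
  obtain rfl : t = t' :=
    Dart.ext _ _ (Prod.ext (h.fst_eq.trans h'.fst_eq.symm) (h.snd_eq.trans h'.snd_eq.symm))
  rw [← h.apex_eq, ← h'.apex_eq]

lemma edge_eq_of_mem_faceOf (h : R.IsTriangleFace t x y z) {d : G.Dart} (hd : d ∈ R.faceOf t) :
    d.edge = s(x, y) ∨ d.edge = s(y, z) ∨ d.edge = s(z, x) := by
  rcases R.faceOf_subset_of_faceLen_eq_three h.faceLen_eq hd with rfl | rfl | rfl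
  · exact Or.inl (h.fst_eq ▸ h.snd_eq ▸ rfl)
  · exact Or.inr (Or.inl (h.rotate.fst_eq ▸ h.rotate.snd_eq ▸ rfl))
  · exact Or.inr (Or.inr (h.rotate.rotate.fst_eq ▸ h.rotate.rotate.snd_eq ▸ rfl))

lemma shares3Face (h : R.IsTriangleFace t x y z) : R.shares3Face s(x, y) s(y, z) :=
  ⟨t, R.facePerm t, h.fst_eq ▸ h.snd_eq ▸ rfl, h.rotate.fst_eq ▸ h.rotate.snd_eq ▸ rfl,
    h.faceLen_eq, R.facePerm_mem_faceOf t⟩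

end IsTriangleFace

instance : Std.Symm R.shares3Face where
  symm := by
    rintro e₁ e₂ ⟨d₁, d₂, rfl, rfl, hd₁, hd₂⟩
    exact ⟨d₂, d₁, rfl, rfl, (R.faceLen_eq_of_mem hd₂).trans hd₁, hd₂.symm⟩

lemma mem_triBlockOf_self (e : Sym2 V) : e ∈ R.triBlockOf e := Relation.ReflTransGen.refl

lemma triBlockOf_eq_of_mem {e e' : Sym2 V} (h : e' ∈ R.triBlockOf e) :
    R.triBlockOf e' = R.triBlockOf e := by
  ext f
  exact ⟨h.trans, (Std.Symm.symm _ _ h).trans⟩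

lemma IsTriangleFace.mem_triBlockOf {t : G.Dart} {x y z : V} {e : Sym2 V}
    (h : R.IsTriangleFace t x y z) (hxy : s(x, y) ∈ R.triBlockOf e) :
    s(y, z) ∈ R.triBlockOf e ∧ s(z, x) ∈ R.triBlockOf e :=
  have hyz : s(y, z) ∈ R.triBlockOf e := hxy.tail h.shares3Face
  ⟨hyz, hyz.tail h.rotate.shares3Face⟩

lemma IsTriangleFace.triBlockOf_eq {t : G.Dart} {x y z : V} (h : R.IsTriangleFace t x y z) :
    R.triBlockOf s(y, z) = R.triBlockOf s(x, y) :=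
  triBlockOf_eq_of_mem (h.mem_triBlockOf (mem_triBlockOf_self _)).1

lemma triBlockOf_eq_of_closed {e : Sym2 V} {S : Set (Sym2 V)} (he : e ∈ S)
    (hS : S ⊆ R.triBlockOf e)
    (hclosed : ∀ ⦃t x y z⦄, R.IsTriangleFace t x y z → s(x, y) ∈ S → s(y, z) ∈ S) :
    R.triBlockOf e = S := by
  refine subset_antisymm (fun e' he' => ?_) hS
  induction he' with
  | refl => exact he
  | tail _ hstep ih =>
    obtain ⟨d₁, d₂, rfl, rfl, hd₁, hd₂⟩ := hstep
    have hT := IsTriangleFace.of_faceLen hd₁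
    have hyz := hclosed hT ih
    have hzx := hclosed hT.rotate hyz
    rcases hT.edge_eq_of_mem_faceOf hd₂ with h | h | h <;> rw [h] <;> assumption

lemma triBlockOf_eq_singleton {e : Sym2 V} (h : ∀ d : G.Dart, d.edge = e → R.faceLen d ≠ 3) :
    R.triBlockOf e = {e} := by
  refine triBlockOf_eq_of_closed rfl (by simp [mem_triBlockOf_self]) ?_
  intro t x y z hT hxy
  exact absurd hT.faceLen_eq (h t (hxy ▸ hT.fst_eq ▸ hT.snd_eq ▸ rfl))

end RotationSystem

def IsAdmissibleBlock (B : Set (Sym2 V)) : Prop :=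
  IsK2Block B ∨ IsK3Block B ∨ IsB4Block B ∨ IsB5aBlock B ∨ IsB5bBlock B

open RotationSystem

variable {R : RotationSystem G} {q : G.Dart} {z : V}

section Wheel

variable {t₁ t₂ t₃ t₄ : G.Dart} {y x₁ x₂ x₃ x₄ : V}

lemma not_isTriangleFace_wheel_rim (hK4 : G.CliqueFree 4) (hC6 : G.CycleFree 6)
    (h₁ : R.IsTriangleFace t₁ y x₂ x₁) (h₂ : R.IsTriangleFace t₂ y x₃ x₂)
    (h₃ : R.IsTriangleFace t₃ y x₄ x₃) (h₄ : R.IsTriangleFace t₄ y x₁ x₄)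
    (h₁₃ : x₁ ≠ x₃) (h₂₄ : x₂ ≠ x₄) : ¬ R.IsTriangleFace q x₁ x₂ z := by
  intro hq
  have hzy : z ≠ y := by rintro rfl; exact h₁₃ (hq.rotate.apex_unique h₂.rotate.rotate)
  have hz₃ : z ≠ x₃ := by
    rintro rfl
    exact not_cliqueFree_four_of_adj h₄.adj₁₂ h₁.adj₁₂ h₂.adj₁₂ hq.adj₁₂ hq.adj₃₁.symm hq.adj₂₃ hK4
  have hz₄ : z ≠ x₄ := by
    rintro rfl
    exact not_cliqueFree_four_of_adj h₄.adj₁₂ h₁.adj₁₂ h₃.adj₁₂ hq.adj₁₂ hq.adj₃₁.symm hq.adj₂₃ hK4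
  exact not_cycleFree_six_of_adj hq.adj₃₁ h₄.adj₂₃ h₃.adj₂₃ h₂.adj₁₂.symm h₁.adj₁₂ hq.adj₂₃
    hz₄ hz₃ hzy h₁₃ h₄.adj₁₂.ne.symm hq.adj₁₂.ne h₃.adj₁₂.ne.symm h₂₄.symm h₂.adj₂₃.ne hC6

lemma triBlockOf_wheel (hK4 : G.CliqueFree 4) (hC6 : G.CycleFree 6)
    (h₁ : R.IsTriangleFace t₁ y x₂ x₁) (h₂ : R.IsTriangleFace t₂ y x₃ x₂)
    (h₃ : R.IsTriangleFace t₃ y x₄ x₃) (h₄ : R.IsTriangleFace t₄ y x₁ x₄)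
    (h₁₃ : x₁ ≠ x₃) (h₂₄ : x₂ ≠ x₄) :
    R.triBlockOf s(y, x₂) =
      {s(y, x₁), s(y, x₂), s(y, x₃), s(y, x₄), s(x₁, x₂), s(x₂, x₃), s(x₃, x₄), s(x₄, x₁)} := by
  refine triBlockOf_eq_of_closed (by simp) ?_ ?_
  · have e₂ := mem_triBlockOf_self (R := R) s(y, x₂)
    obtain ⟨e₂₁, -⟩ := h₁.mem_triBlockOf e₂
    obtain ⟨e₃, e₃₂⟩ := h₂.rotate.rotate.mem_triBlockOf (mk_mem_comm.1 e₂)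
    obtain ⟨e₄, e₄₃⟩ := h₃.rotate.rotate.mem_triBlockOf (mk_mem_comm.1 e₃)
    obtain ⟨e₁, e₁₄⟩ := h₄.rotate.rotate.mem_triBlockOf (mk_mem_comm.1 e₄)
    simp only [Set.insert_subset_iff, Set.singleton_subset_iff]
    exact ⟨e₁, e₂, e₃, e₄, mk_mem_comm.1 e₂₁, mk_mem_comm.1 e₃₂, mk_mem_comm.1 e₄₃,
      mk_mem_comm.1 e₁₄⟩
  · intro q u v w hq huv
    simp only [Set.mem_insert_iff, Set.mem_singleton_iff, Sym2.eq_iff, or_assoc] at huv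
    rcases huv with ⟨rfl, rfl⟩ | ⟨rfl, rfl⟩ | ⟨rfl, rfl⟩ | ⟨rfl, rfl⟩ | ⟨rfl, rfl⟩ | ⟨rfl, rfl⟩ |
      ⟨rfl, rfl⟩ | ⟨rfl, rfl⟩ | ⟨rfl, rfl⟩ | ⟨rfl, rfl⟩ | ⟨rfl, rfl⟩ | ⟨rfl, rfl⟩ | ⟨rfl, rfl⟩ |
      ⟨rfl, rfl⟩ | ⟨rfl, rfl⟩ | ⟨rfl, rfl⟩
    · obtain rfl := h₄.apex_unique hq; simp
    · obtain rfl := h₁.rotate.rotate.apex_unique hq; simp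
    · obtain rfl := h₁.apex_unique hq; simp
    · obtain rfl := h₂.rotate.rotate.apex_unique hq; simp
    · obtain rfl := h₂.apex_unique hq; simp
    · obtain rfl := h₃.rotate.rotate.apex_unique hq; simp
    · obtain rfl := h₃.apex_unique hq; simp
    · obtain rfl := h₄.rotate.rotate.apex_unique hq; simp
    · exact absurd hq (not_isTriangleFace_wheel_rim hK4 hC6 h₁ h₂ h₃ h₄ h₁₃ h₂₄)
    · obtain rfl := h₁.rotate.apex_unique hq; simp
    · exact absurd hq (not_isTriangleFace_wheel_rim hK4 hC6 h₂ h₃ h₄ h₁ h₂₄ h₁₃.symm)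
    · obtain rfl := h₂.rotate.apex_unique hq; simp
    · exact absurd hq (not_isTriangleFace_wheel_rim hK4 hC6 h₃ h₄ h₁ h₂ h₁₃.symm h₂₄.symm)
    · obtain rfl := h₃.rotate.apex_unique hq; simp
    · exact absurd hq (not_isTriangleFace_wheel_rim hK4 hC6 h₄ h₁ h₂ h₃ h₂₄.symm h₁₃)
    · obtain rfl := h₄.rotate.apex_unique hq; simp

end Wheel

section Fan

variable {t₁ t₂ t₃ : G.Dart} {y x₁ x₂ x₃ x₄ : V}

lemma fan_apex_eq_of_isTriangleFace_first_spoke (hK4 : G.CliqueFree 4) (hC6 : G.CycleFree 6)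
    (h₁ : R.IsTriangleFace t₁ y x₂ x₁) (h₂ : R.IsTriangleFace t₂ x₂ y x₃)
    (h₃ : R.IsTriangleFace t₃ x₃ y x₄) (h₁₃ : x₁ ≠ x₃) (h₁₄ : x₁ ≠ x₄) (h₂₄ : x₂ ≠ x₄)
    (hq : R.IsTriangleFace q y x₁ z) : z = x₄ := by
  by_contra hz₄
  have hz₂ : z ≠ x₂ := by rintro rfl; exact h₁₃ (hq.rotate.rotate.apex_unique h₂)
  have hz₃ : z ≠ x₃ := by
    rintro rfl
    exact not_cliqueFree_four_of_adj hq.adj₁₂ h₁.adj₁₂ h₂.adj₂₃ h₁.adj₂₃.symm hq.adj₂₃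
      h₂.adj₃₁.symm hK4
  exact not_cycleFree_six_of_adj hq.adj₂₃.symm h₁.adj₂₃.symm h₂.adj₃₁.symm h₃.adj₃₁.symm
    h₃.adj₂₃.symm hq.adj₃₁.symm hz₂ hz₃ hz₄ h₁₃ h₁₄ h₁.adj₃₁.ne h₂₄ h₂.adj₁₂.ne h₃.adj₁₂.ne hC6

lemma fan_apex_eq_of_isTriangleFace_last_spoke (hK4 : G.CliqueFree 4) (hC6 : G.CycleFree 6)
    (h₁ : R.IsTriangleFace t₁ y x₂ x₁) (h₂ : R.IsTriangleFace t₂ x₂ y x₃)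
    (h₃ : R.IsTriangleFace t₃ x₃ y x₄) (h₁₃ : x₁ ≠ x₃) (h₁₄ : x₁ ≠ x₄) (h₂₄ : x₂ ≠ x₄)
    (hq : R.IsTriangleFace q x₄ y z) : z = x₁ := by
  by_contra hz₁
  have hz₃ : z ≠ x₃ := by rintro rfl; exact h₂₄ (hq.rotate.apex_unique h₂.rotate).symm
  have hz₂ : z ≠ x₂ := by
    rintro rfl
    exact not_cliqueFree_four_of_adj h₁.adj₁₂ h₂.adj₂₃ h₃.adj₂₃ h₂.adj₃₁.symm hq.adj₃₁
      h₃.adj₃₁.symm hK4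
  exact not_cycleFree_six_of_adj hq.adj₃₁ h₃.adj₃₁ h₂.adj₃₁ h₁.adj₂₃ h₁.adj₃₁ hq.adj₂₃
    hz₃ hz₂ hz₁ h₂₄.symm h₁₄.symm h₃.adj₂₃.ne.symm h₁₃.symm h₃.adj₁₂.ne h₂.adj₁₂.ne hC6

lemma fan_not_isTriangleFace_rim₁₂ (hK4 : G.CliqueFree 4) (hC6 : G.CycleFree 6)
    (h₁ : R.IsTriangleFace t₁ y x₂ x₁) (h₂ : R.IsTriangleFace t₂ x₂ y x₃)
    (h₃ : R.IsTriangleFace t₃ x₃ y x₄) (h₁₃ : x₁ ≠ x₃) (h₁₄ : x₁ ≠ x₄) (h₂₄ : x₂ ≠ x₄) :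
    ¬ R.IsTriangleFace q x₁ x₂ z := by
  intro hq
  have hzy : z ≠ y := by rintro rfl; exact h₁₃ (hq.rotate.apex_unique h₂)
  have hz₃ : z ≠ x₃ := by
    rintro rfl
    exact not_cliqueFree_four_of_adj h₁.adj₃₁.symm h₁.adj₁₂ h₂.adj₂₃ hq.adj₁₂ hq.adj₃₁.symm
      hq.adj₂₃ hK4
  have hz₄ : z ≠ x₄ := by
    rintro rfl
    exact not_cliqueFree_four_of_adj h₁.adj₃₁.symm h₁.adj₁₂ h₃.adj₂₃ hq.adj₁₂ hq.adj₃₁.symm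
      hq.adj₂₃ hK4
  exact not_cycleFree_six_of_adj hq.adj₃₁ h₁.adj₃₁ h₃.adj₂₃ h₃.adj₃₁ h₂.adj₃₁ hq.adj₂₃
    hzy hz₄ hz₃ h₁₄ h₁₃ hq.adj₁₂.ne h₂.adj₂₃.ne h₁.adj₁₂.ne h₂₄.symm hC6

lemma fan_not_isTriangleFace_rim₂₃ (hK4 : G.CliqueFree 4) (hC6 : G.CycleFree 6)
    (h₁ : R.IsTriangleFace t₁ y x₂ x₁) (h₂ : R.IsTriangleFace t₂ x₂ y x₃)
    (h₃ : R.IsTriangleFace t₃ x₃ y x₄) (h₁₃ : x₁ ≠ x₃) (h₁₄ : x₁ ≠ x₄) (h₂₄ : x₂ ≠ x₄) :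
    ¬ R.IsTriangleFace q x₂ x₃ z := by
  intro hq
  have hzy : z ≠ y := by rintro rfl; exact h₂₄ (hq.rotate.apex_unique h₃)
  have hz₁ : z ≠ x₁ := by
    rintro rfl
    exact not_cliqueFree_four_of_adj h₁.adj₃₁.symm h₁.adj₁₂ h₂.adj₂₃ h₁.adj₂₃.symm
      hq.adj₂₃.symm hq.adj₁₂ hK4
  have hz₄ : z ≠ x₄ := by
    rintro rfl
    exact not_cliqueFree_four_of_adj h₁.adj₁₂ h₂.adj₂₃ h₃.adj₂₃ hq.adj₁₂ hq.adj₃₁.symm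
      hq.adj₂₃ hK4
  exact not_cycleFree_six_of_adj hq.adj₃₁ h₁.adj₂₃ h₁.adj₃₁ h₃.adj₂₃ h₃.adj₃₁ hq.adj₂₃
    hz₁ hzy hz₄ h₂.adj₁₂.ne h₂₄ hq.adj₁₂.ne h₁₄ h₁₃ h₂.adj₂₃.ne hC6

lemma fan_not_isTriangleFace_rim₃₄ (hK4 : G.CliqueFree 4) (hC6 : G.CycleFree 6)
    (h₁ : R.IsTriangleFace t₁ y x₂ x₁) (h₂ : R.IsTriangleFace t₂ x₂ y x₃)
    (h₃ : R.IsTriangleFace t₃ x₃ y x₄) (h₁₃ : x₁ ≠ x₃) (h₁₄ : x₁ ≠ x₄) (h₂₄ : x₂ ≠ x₄) :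
    ¬ R.IsTriangleFace q x₃ x₄ z := by
  intro hq
  have hzy : z ≠ y := by rintro rfl; exact h₂₄ (hq.rotate.rotate.apex_unique h₂.rotate).symm
  have hz₁ : z ≠ x₁ := by
    rintro rfl
    exact not_cliqueFree_four_of_adj h₁.adj₃₁.symm h₂.adj₂₃ h₃.adj₂₃ hq.adj₃₁ hq.adj₂₃.symm
      hq.adj₁₂ hK4
  have hz₂ : z ≠ x₂ := by
    rintro rfl
    exact not_cliqueFree_four_of_adj h₁.adj₁₂ h₂.adj₂₃ h₃.adj₂₃ hq.adj₃₁ hq.adj₂₃.symm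
      hq.adj₁₂ hK4
  exact not_cycleFree_six_of_adj hq.adj₂₃.symm h₃.adj₂₃.symm h₁.adj₃₁.symm h₁.adj₂₃.symm
    h₂.adj₃₁.symm hq.adj₃₁.symm hzy hz₁ hz₂ h₁₄.symm h₂₄.symm hq.adj₁₂.ne.symm h₁.adj₁₂.ne
    h₂.adj₂₃.ne h₁₃ hC6

lemma triBlockOf_fan (hK4 : G.CliqueFree 4) (hC6 : G.CycleFree 6)
    (h₁ : R.IsTriangleFace t₁ y x₂ x₁) (h₂ : R.IsTriangleFace t₂ x₂ y x₃)
    (h₃ : R.IsTriangleFace t₃ x₃ y x₄) (h₁₃ : x₁ ≠ x₃) (h₁₄ : x₁ ≠ x₄) (h₂₄ : x₂ ≠ x₄)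
    (hW : ∀ q, ¬ R.IsTriangleFace q y x₁ x₄) :
    R.triBlockOf s(y, x₂) =
      {s(y, x₁), s(y, x₂), s(y, x₃), s(y, x₄), s(x₁, x₂), s(x₂, x₃), s(x₃, x₄)} := by
  refine triBlockOf_eq_of_closed (by simp) ?_ ?_
  · have e₂ := mem_triBlockOf_self (R := R) s(y, x₂)
    obtain ⟨e₂₁, e₁⟩ := h₁.mem_triBlockOf e₂
    obtain ⟨e₃, e₃₂⟩ := h₂.mem_triBlockOf (mk_mem_comm.1 e₂)
    obtain ⟨e₄, e₄₃⟩ := h₃.mem_triBlockOf (mk_mem_comm.1 e₃)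
    simp only [Set.insert_subset_iff, Set.singleton_subset_iff]
    exact ⟨mk_mem_comm.1 e₁, e₂, e₃, e₄, mk_mem_comm.1 e₂₁, mk_mem_comm.1 e₃₂, mk_mem_comm.1 e₄₃⟩
  · intro q u v w hq huv
    simp only [Set.mem_insert_iff, Set.mem_singleton_iff, Sym2.eq_iff, or_assoc] at huv
    rcases huv with ⟨rfl, rfl⟩ | ⟨rfl, rfl⟩ | ⟨rfl, rfl⟩ | ⟨rfl, rfl⟩ | ⟨rfl, rfl⟩ | ⟨rfl, rfl⟩ |
      ⟨rfl, rfl⟩ | ⟨rfl, rfl⟩ | ⟨rfl, rfl⟩ | ⟨rfl, rfl⟩ | ⟨rfl, rfl⟩ | ⟨rfl, rfl⟩ | ⟨rfl, rfl⟩ |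
      ⟨rfl, rfl⟩
    · obtain rfl := fan_apex_eq_of_isTriangleFace_first_spoke hK4 hC6 h₁ h₂ h₃ h₁₃ h₁₄ h₂₄ hq
      exact absurd hq (hW q)
    · obtain rfl := h₁.rotate.rotate.apex_unique hq; simp
    · obtain rfl := h₁.apex_unique hq; simp
    · obtain rfl := h₂.apex_unique hq; simp
    · obtain rfl := h₂.rotate.apex_unique hq; simp
    · obtain rfl := h₃.apex_unique hq; simp
    · obtain rfl := h₃.rotate.apex_unique hq; simp
    · obtain rfl := fan_apex_eq_of_isTriangleFace_last_spoke hK4 hC6 h₁ h₂ h₃ h₁₃ h₁₄ h₂₄ hq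
      exact absurd hq.rotate (hW _)
    · exact absurd hq (fan_not_isTriangleFace_rim₁₂ hK4 hC6 h₁ h₂ h₃ h₁₃ h₁₄ h₂₄)
    · obtain rfl := h₁.rotate.apex_unique hq; simp
    · exact absurd hq (fan_not_isTriangleFace_rim₂₃ hK4 hC6 h₁ h₂ h₃ h₁₃ h₁₄ h₂₄)
    · obtain rfl := h₂.rotate.rotate.apex_unique hq; simp
    · exact absurd hq (fan_not_isTriangleFace_rim₃₄ hK4 hC6 h₁ h₂ h₃ h₁₃ h₁₄ h₂₄)
    · obtain rfl := h₃.rotate.rotate.apex_unique hq; simp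

lemma isAdmissibleBlock_fan (hK4 : G.CliqueFree 4) (hC6 : G.CycleFree 6)
    (h₁ : R.IsTriangleFace t₁ y x₂ x₁) (h₂ : R.IsTriangleFace t₂ x₂ y x₃)
    (h₃ : R.IsTriangleFace t₃ x₃ y x₄) (h₁₃ : x₁ ≠ x₃) (h₁₄ : x₁ ≠ x₄) (h₂₄ : x₂ ≠ x₄) :
    IsAdmissibleBlock (R.triBlockOf s(y, x₂)) := by
  obtain ⟨hy₁, hy₂, hy₃, hy₄, h₁₂, h₂₃, h₃₄⟩ :
      y ≠ x₁ ∧ y ≠ x₂ ∧ y ≠ x₃ ∧ y ≠ x₄ ∧ x₁ ≠ x₂ ∧ x₂ ≠ x₃ ∧ x₃ ≠ x₄ :=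
    ⟨h₁.adj₃₁.ne.symm, h₁.adj₁₂.ne, h₂.adj₂₃.ne, h₃.adj₂₃.ne, h₁.adj₂₃.ne.symm,
      h₂.adj₃₁.ne.symm, h₃.adj₃₁.ne.symm⟩
  by_cases hW : ∃ q, R.IsTriangleFace q y x₁ x₄
  · obtain ⟨q, hq⟩ := hW
    rw [triBlockOf_wheel hK4 hC6 h₁ h₂.rotate h₃.rotate hq h₁₃ h₂₄]
    exact Or.inr <| Or.inr <| Or.inr <| Or.inr
      ⟨y, x₁, x₂, x₃, x₄, hy₁, hy₂, hy₃, hy₄, h₁₂, h₁₃, h₁₄, h₂₃, h₂₄, h₃₄, rfl⟩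
  · rw [triBlockOf_fan hK4 hC6 h₁ h₂ h₃ h₁₃ h₁₄ h₂₄ (not_exists.1 hW)]
    exact Or.inr <| Or.inr <| Or.inr <| Or.inl
      ⟨y, x₁, x₂, x₃, x₄, hy₁, hy₂, hy₃, hy₄, h₁₂, h₁₃, h₁₄, h₂₃, h₂₄, h₃₄, rfl⟩

end Fan

section Diamond

variable {t u : G.Dart} {a b c w v : V}

lemma diamond_apex_ne_of_isTriangleFace₁ (hK4 : G.CliqueFree 4) (hT : R.IsTriangleFace t a b c)
    (hU : R.IsTriangleFace u b a w) (hwc : w ≠ c) (hq : R.IsTriangleFace q c b v) :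
    v ≠ a ∧ v ≠ w := by
  refine ⟨?_, ?_⟩
  · rintro rfl; exact hwc (hU.apex_unique hq.rotate)
  · rintro rfl
    exact not_cliqueFree_four_of_adj hT.adj₁₂ hT.adj₃₁.symm hU.adj₂₃ hT.adj₂₃ hU.adj₃₁.symm
      hq.adj₃₁.symm hK4

lemma diamond_apex_ne_of_isTriangleFace₂ (hK4 : G.CliqueFree 4) (hT : R.IsTriangleFace t a b c)
    (hU : R.IsTriangleFace u b a w) (hwc : w ≠ c) (hq : R.IsTriangleFace q a c v) :
    v ≠ b ∧ v ≠ w := by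
  refine ⟨?_, ?_⟩
  · rintro rfl; exact hwc (hU.apex_unique hq.rotate.rotate)
  · rintro rfl
    exact not_cliqueFree_four_of_adj hT.adj₁₂ hT.adj₃₁.symm hU.adj₂₃ hT.adj₂₃ hU.adj₃₁.symm
      hq.adj₂₃ hK4

lemma triBlockOf_diamond (hT : R.IsTriangleFace t a b c) (hU : R.IsTriangleFace u b a w)
    (h₁ : ∀ q v, ¬ R.IsTriangleFace q c b v) (h₂ : ∀ q v, ¬ R.IsTriangleFace q a c v)
    (h₃ : ∀ q v, ¬ R.IsTriangleFace q w a v) (h₄ : ∀ q v, ¬ R.IsTriangleFace q b w v) :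
    R.triBlockOf s(a, b) = {s(c, a), s(c, b), s(a, b), s(a, w), s(b, w)} := by
  refine triBlockOf_eq_of_closed (by simp) ?_ ?_
  · have e₁ := mem_triBlockOf_self (R := R) s(a, b)
    obtain ⟨e₂, e₃⟩ := hT.mem_triBlockOf e₁
    obtain ⟨e₄, e₅⟩ := hU.mem_triBlockOf (mk_mem_comm.1 e₁)
    simp only [Set.insert_subset_iff, Set.singleton_subset_iff]
    exact ⟨e₃, mk_mem_comm.1 e₂, e₁, e₄, mk_mem_comm.1 e₅⟩
  · intro q x y z hq hxy
    simp only [Set.mem_insert_iff, Set.mem_singleton_iff, Sym2.eq_iff, or_assoc] at hxy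
    rcases hxy with ⟨rfl, rfl⟩ | ⟨rfl, rfl⟩ | ⟨rfl, rfl⟩ | ⟨rfl, rfl⟩ | ⟨rfl, rfl⟩ | ⟨rfl, rfl⟩ |
      ⟨rfl, rfl⟩ | ⟨rfl, rfl⟩ | ⟨rfl, rfl⟩ | ⟨rfl, rfl⟩
    · obtain rfl := hT.rotate.rotate.apex_unique hq; simp
    · exact absurd hq (h₂ _ _)
    · exact absurd hq (h₁ _ _)
    · obtain rfl := hT.rotate.apex_unique hq; simp
    · obtain rfl := hT.apex_unique hq; simp
    · obtain rfl := hU.apex_unique hq; simp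
    · obtain rfl := hU.rotate.apex_unique hq; simp
    · exact absurd hq (h₃ _ _)
    · exact absurd hq (h₄ _ _)
    · obtain rfl := hU.rotate.rotate.apex_unique hq; simp

lemma isAdmissibleBlock_diamond_of_extension (hK4 : G.CliqueFree 4) (hC6 : G.CycleFree 6)
    (hT : R.IsTriangleFace t a b c) (hU : R.IsTriangleFace u b a w) (hwc : w ≠ c)
    (h : (∃ q v, R.IsTriangleFace q c b v) ∨ ∃ q v, R.IsTriangleFace q a c v) :
    IsAdmissibleBlock (R.triBlockOf s(a, b)) := by
  rcases h with ⟨q, v, hq⟩ | ⟨q, v, hq⟩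
  · obtain ⟨hva, hvw⟩ := diamond_apex_ne_of_isTriangleFace₁ hK4 hT hU hwc hq
    rw [Sym2.eq_swap]
    exact isAdmissibleBlock_fan hK4 hC6 hU hT hq hwc hvw.symm hva.symm
  · obtain ⟨hvb, hvw⟩ := diamond_apex_ne_of_isTriangleFace₂ hK4 hT hU hwc hq
    rw [hT.rotate.rotate.triBlockOf_eq, Sym2.eq_swap]
    exact isAdmissibleBlock_fan hK4 hC6 hq hT.rotate.rotate hU hvb hvw hwc.symm

lemma isAdmissibleBlock_diamond (hK4 : G.CliqueFree 4) (hC6 : G.CycleFree 6)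
    (hT : R.IsTriangleFace t a b c) (hU : R.IsTriangleFace u b a w) (hwc : w ≠ c) :
    IsAdmissibleBlock (R.triBlockOf s(a, b)) := by
  by_cases h : (∃ q v, R.IsTriangleFace q c b v) ∨ ∃ q v, R.IsTriangleFace q a c v
  · exact isAdmissibleBlock_diamond_of_extension hK4 hC6 hT hU hwc h
  by_cases h' : (∃ q v, R.IsTriangleFace q w a v) ∨ ∃ q v, R.IsTriangleFace q b w v
  · -- the same diamond, read from its face `u`
    rw [Sym2.eq_swap]
    exact isAdmissibleBlock_diamond_of_extension hK4 hC6 hU hT hwc.symm h'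
  simp only [not_or, not_exists] at h h'
  rw [triBlockOf_diamond hT hU h.1 h.2 h'.1 h'.2]
  exact Or.inr <| Or.inr <| Or.inl ⟨c, a, b, w, hT.adj₃₁.ne, hT.adj₂₃.ne.symm, hwc.symm,
    hT.adj₁₂.ne, hU.adj₂₃.ne, hU.adj₃₁.ne.symm, rfl⟩

end Diamond

section Triangle

variable {t : G.Dart} {a b c : V}

lemma triBlockOf_triangle (hT : R.IsTriangleFace t a b c)
    (h₁ : ∀ q v, R.IsTriangleFace q b a v → v = c) (h₂ : ∀ q v, R.IsTriangleFace q c b v → v = a)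
    (h₃ : ∀ q v, R.IsTriangleFace q a c v → v = b) :
    R.triBlockOf s(a, b) = {s(a, b), s(b, c), s(a, c)} := by
  refine triBlockOf_eq_of_closed (by simp) ?_ ?_
  · have e₁ := mem_triBlockOf_self (R := R) s(a, b)
    obtain ⟨e₂, e₃⟩ := hT.mem_triBlockOf e₁
    simp only [Set.insert_subset_iff, Set.singleton_subset_iff]
    exact ⟨e₁, e₂, mk_mem_comm.1 e₃⟩
  · intro q x y z hq hxy
    simp only [Set.mem_insert_iff, Set.mem_singleton_iff, Sym2.eq_iff, or_assoc] at hxy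
    rcases hxy with ⟨rfl, rfl⟩ | ⟨rfl, rfl⟩ | ⟨rfl, rfl⟩ | ⟨rfl, rfl⟩ | ⟨rfl, rfl⟩ | ⟨rfl, rfl⟩
    · obtain rfl := hT.apex_unique hq; simp
    · obtain rfl := h₁ _ _ hq; simp
    · obtain rfl := hT.rotate.apex_unique hq; simp
    · obtain rfl := h₂ _ _ hq; simp
    · obtain rfl := h₃ _ _ hq; simp
    · obtain rfl := hT.rotate.rotate.apex_unique hq; simp

lemma isAdmissibleBlock_triangle (hK4 : G.CliqueFree 4) (hC6 : G.CycleFree 6)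
    (hT : R.IsTriangleFace t a b c) : IsAdmissibleBlock (R.triBlockOf s(a, b)) := by
  by_cases h₁ : ∃ q w, R.IsTriangleFace q b a w ∧ w ≠ c
  · obtain ⟨q, w, hq, hwc⟩ := h₁
    exact isAdmissibleBlock_diamond hK4 hC6 hT hq hwc
  by_cases h₂ : ∃ q w, R.IsTriangleFace q c b w ∧ w ≠ a
  · obtain ⟨q, w, hq, hwa⟩ := h₂
    rw [← hT.triBlockOf_eq]
    exact isAdmissibleBlock_diamond hK4 hC6 hT.rotate hq hwa
  by_cases h₃ : ∃ q w, R.IsTriangleFace q a c w ∧ w ≠ b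
  · obtain ⟨q, w, hq, hwb⟩ := h₃
    rw [← hT.triBlockOf_eq, ← hT.rotate.triBlockOf_eq]
    exact isAdmissibleBlock_diamond hK4 hC6 hT.rotate.rotate hq hwb
  simp only [not_exists, not_and, not_not] at h₁ h₂ h₃
  rw [triBlockOf_triangle hT h₁ h₂ h₃]
  exact Or.inr <| Or.inl ⟨a, b, c, hT.adj₁₂.ne, hT.adj₃₁.ne.symm, hT.adj₂₃.ne, rfl⟩

end Triangle

end PlanarTuran

theorem triangularBlock_types_K4_C6_free_general {V : Type*} (G : SimpleGraph V)
    (R : PlanarTuran.RotationSystem G)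
    (hK4 : G.CliqueFree 4) (hC6 : G.CycleFree 6) :
    ∀ B : Set (Sym2 V), R.IsTriangularBlock B →
      PlanarTuran.IsK2Block B ∨ PlanarTuran.IsK3Block B ∨ PlanarTuran.IsB4Block B ∨
        PlanarTuran.IsB5aBlock B ∨ PlanarTuran.IsB5bBlock B := by
  rintro B ⟨e, he, rfl⟩
  by_cases h : ∃ d : G.Dart, d.edge = e ∧ R.faceLen d = 3
  · obtain ⟨d, rfl, hd⟩ := h
    exact isAdmissibleBlock_triangle hK4 hC6 (.of_faceLen hd)
  · induction e using Sym2.ind with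
    | _ u v =>
      refine Or.inl ⟨u, v, (G.mem_edgeSet.1 he).ne, R.triBlockOf_eq_singleton ?_⟩
      simpa using h

/-- In a plane graph containing neither `K₄` nor `C₆` as a subgraph, every
triangular block is a single edge `K₂`, a triangle `K₃`, `B₄`, `B₅ₐ`, or `B₅ᵦ` (the wheel
`W₄`). -/
theorem triangularBlock_types_K4_C6_free {V : Type*} (G : SimpleGraph V)
    (R : PlanarTuran.RotationSystem G) (hplane : R.GenusZero)
    (hK4 : G.CliqueFree 4) (hC6 : G.CycleFree 6) :
    ∀ B : Set (Sym2 V), R.IsTriangularBlock B →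
      PlanarTuran.IsK2Block B ∨ PlanarTuran.IsK3Block B ∨ PlanarTuran.IsB4Block B ∨
        PlanarTuran.IsB5aBlock B ∨ PlanarTuran.IsB5bBlock B :=
  triangularBlock_types_K4_C6_free_general G R hK4 hC6
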